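/- arXiv:2401.04276 — 2 statements merged into one kernel-verified Lean document; each statement's English description precedes it below -/
import Mathlib

section
/- Construction of a test function from a parabolic superjet element: Let v : K → ℝ be continuous, let (t,x) ∈ K, and let (b,p,A) ∈ P⁺v(t,x). Then for every ε ∈ (0,1] and δ ∈ (0,1] there exist a real r > 0 and a continuous function f : K → ℝ, which is once continuously differentiable in the time variable and twice continuously differentiable in the space variable on a neighborhood of (t,x), with the following properties: (i) f(t,x) = v(t,x), f_t(t,x) = b, f_x(t,x) = p, f_{xx}(t,x) = A; (ii) v ≤ f ≤ v + ε on K; (iii) f(t+h₁, x+h₂) = v(t,x) + b h₁ + p h₂ + (1/2) A h₂² + ρ(h₁,h₂) for all (h₁,h₂) with |(h₁,h₂)| < r, where ρ : ℝ² → ℝ is a compactly supported function, once continuously differentiable in h₁ and twice continuously differentiable in h₂, satisfying ρ(h₁,h₂)/(|h₁| + |h₂|²) → 0 as (h₁,h₂) → (0,0); (iv) f = v on K outside the open ball of radius r + δ centered at (t,x). -/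
open Set Filter Topology Asymptotics

noncomputable section

/-- `f : ℝ × ℝ → ℝ` is once continuously differentiable in the first (time) variable and
twice continuously differentiable in the second (space) variable on a set `U`,
witnessed by continuous partial derivatives `g1` (in time), `g2` and `g3` (first and
second derivatives in space). -/
def C12On (f : ℝ × ℝ → ℝ) (U : Set (ℝ × ℝ)) : Prop :=
  ∃ g1 g2 g3 : ℝ × ℝ → ℝ,
    ContinuousOn g1 U ∧ ContinuousOn g2 U ∧ ContinuousOn g3 U ∧
    (∀ p ∈ U, HasDerivAt (fun s => f (s, p.2)) (g1 p) p.1) ∧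
    (∀ p ∈ U, HasDerivAt (fun y => f (p.1, y)) (g2 p) p.2) ∧
    (∀ p ∈ U, HasDerivAt (fun y => g2 (p.1, y)) (g3 p) p.2)

/-- The parabolic superjet `P⁺v(t,x)`: triples `(b,p,A)` such that
`v(t+h₁, x+h₂) ≤ v(t,x) + b h₁ + p h₂ + (1/2) A h₂² + o(|h₁| + |h₂|²)` as `h → 0`. -/
def psuperjet (v : ℝ × ℝ → ℝ) (t x : ℝ) : Set (ℝ × ℝ × ℝ) :=
  {q | ∃ g : ℝ × ℝ → ℝ,
    (g =o[𝓝 (0 : ℝ × ℝ)] fun h : ℝ × ℝ => |h.1| + |h.2| ^ 2) ∧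
    ∀ᶠ h : ℝ × ℝ in 𝓝 0,
      v (t + h.1, x + h.2) ≤
        v (t, x) + q.1 * h.1 + q.2.1 * h.2 + (1 / 2) * q.2.2 * h.2 ^ 2 + g h}

/-- The parabolic subjet `P⁻v(t,x)`: triples `(b,p,A)` such that
`v(t+h₁, x+h₂) ≥ v(t,x) + b h₁ + p h₂ + (1/2) A h₂² - o(|h₁| + |h₂|²)` as `h → 0`. -/
def psubjet (v : ℝ × ℝ → ℝ) (t x : ℝ) : Set (ℝ × ℝ × ℝ) :=
  {q | ∃ g : ℝ × ℝ → ℝ,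
    (g =o[𝓝 (0 : ℝ × ℝ)] fun h : ℝ × ℝ => |h.1| + |h.2| ^ 2) ∧
    ∀ᶠ h : ℝ × ℝ in 𝓝 0,
      v (t + h.1, x + h.2) ≥
        v (t, x) + q.1 * h.1 + q.2.1 * h.2 + (1 / 2) * q.2.2 * h.2 ^ 2 - g h}

set_option linter.unusedVariables false
set_option linter.unusedSectionVars false

namespace JetAux
open MeasureTheory intervalIntegral

def prim (f : ℝ → ℝ) : ℝ → ℝ := fun s => ∫ u in (0:ℝ)..s, f u

lemma prim_sub {f : ℝ → ℝ} (hint : ∀ a b, IntervalIntegrable f volume a b) (a b : ℝ) :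
    prim f b - prim f a = ∫ u in a..b, f u :=
  intervalIntegral.integral_interval_sub_left (hint 0 b) (hint 0 a)

lemma prim_mono {f : ℝ → ℝ} (hint : ∀ a b, IntervalIntegrable f volume a b)
    (hnn : ∀ s, 0 ≤ f s) : Monotone (prim f) := by
  intro a b hab
  have h := prim_sub hint a b
  have : 0 ≤ ∫ u in a..b, f u :=
    intervalIntegral.integral_nonneg hab (fun u _ => hnn u)
  linarith

lemma prim_zero_of_nonpos {f : ℝ → ℝ} (hz : ∀ s ≤ 0, f s = 0) {s : ℝ} (hs : s ≤ 0) :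
    prim f s = 0 := by
  have : (∫ u in (0:ℝ)..s, f u) = ∫ u in (0:ℝ)..s, (0:ℝ) := by
    apply intervalIntegral.integral_congr
    intro u hu
    rw [uIcc_of_ge hs] at hu
    exact hz u hu.2
  simp [prim, this]

lemma prim_nonneg {f : ℝ → ℝ} (hint : ∀ a b, IntervalIntegrable f volume a b)
    (hnn : ∀ s, 0 ≤ f s) (hz : ∀ s ≤ 0, f s = 0) (s : ℝ) : 0 ≤ prim f s := by
  rcases le_or_gt s 0 with h | h
  · rw [prim_zero_of_nonpos hz h]
  · have := prim_mono hint hnn (le_of_lt h)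
    rwa [prim_zero_of_nonpos hz (le_refl 0)] at this

lemma prim_lower {f : ℝ → ℝ} (hint : ∀ a b, IntervalIntegrable f volume a b)
    (hnn : ∀ s, 0 ≤ f s) (hz : ∀ s ≤ 0, f s = 0) (hmono : Monotone f)
    {a b : ℝ} (ha : 0 ≤ a) (hab : a ≤ b) : (b - a) * f a ≤ prim f b := by
  have h1 : prim f b - prim f a = ∫ u in a..b, f u := prim_sub hint a b
  have h2 : (∫ u in a..b, (fun _ => f a) u) ≤ ∫ u in a..b, f u := by
    apply intervalIntegral.integral_mono_on hab (intervalIntegrable_const) (hint a b)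
    intro u hu; exact hmono hu.1
  rw [intervalIntegral.integral_const] at h2
  have h3 : 0 ≤ prim f a := prim_nonneg hint hnn hz a
  simp only [smul_eq_mul] at h2
  linarith

lemma prim_upper {f : ℝ → ℝ} (hint : ∀ a b, IntervalIntegrable f volume a b)
    {c : ℝ} {n : ℕ} {s : ℝ} (hs : 0 ≤ s)
    (hb : ∀ u, 0 ≤ u → u ≤ s → f u ≤ c * u ^ n) :
    prim f s ≤ c * s ^ (n + 1) / (n + 1) := by
  have h2 : (∫ u in (0:ℝ)..s, f u) ≤ ∫ u in (0:ℝ)..s, c * u ^ n := by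
    apply intervalIntegral.integral_mono_on hs (hint 0 s)
    · exact (continuous_const.mul (continuous_pow n)).intervalIntegrable 0 s
    · intro u hu; exact hb u hu.1 hu.2
  have h3 : (∫ u in (0:ℝ)..s, c * u ^ n) = c * s ^ (n + 1) / (n + 1) := by
    rw [intervalIntegral.integral_const_mul, integral_pow]
    ring
  calc prim f s ≤ _ := h2
    _ = _ := h3

def Hf (m : ℝ → ℝ) : ℝ → ℝ := prim m
def Kf (m : ℝ → ℝ) : ℝ → ℝ := prim (Hf m)
def Lf (m : ℝ → ℝ) : ℝ → ℝ := prim (Kf m)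
def psi (m : ℝ → ℝ) : ℝ → ℝ := fun σ => Lf m (4 * Real.sqrt σ) / (Real.sqrt σ) ^ 3
def D1 (m : ℝ → ℝ) : ℝ → ℝ := fun σ =>
  2 * Kf m (4 * Real.sqrt σ) / (Real.sqrt σ) ^ 4
    - (3/2) * Lf m (4 * Real.sqrt σ) / (Real.sqrt σ) ^ 5
def D2 (m : ℝ → ℝ) : ℝ → ℝ := fun σ =>
  4 * Hf m (4 * Real.sqrt σ) / (Real.sqrt σ) ^ 5
    - 7 * Kf m (4 * Real.sqrt σ) / (Real.sqrt σ) ^ 6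
    + (15/4) * Lf m (4 * Real.sqrt σ) / (Real.sqrt σ) ^ 7

variable {m : ℝ → ℝ} (hmono : Monotone m) (hz : ∀ s ≤ 0, m s = 0)
include hmono hz

lemma m_nonneg : ∀ s, 0 ≤ m s := by
  intro s
  rcases le_or_gt s 0 with h | h
  · rw [hz s h]
  · rw [← hz 0 le_rfl]; exact hmono h.le

lemma m_int : ∀ a b, IntervalIntegrable m volume a b := fun a b => hmono.intervalIntegrable

lemma H_mono : Monotone (Hf m) := prim_mono (m_int hmono hz) (m_nonneg hmono hz)
lemma H_nonneg : ∀ s, 0 ≤ Hf m s :=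
  prim_nonneg (m_int hmono hz) (m_nonneg hmono hz) hz
lemma H_zero : ∀ s ≤ 0, Hf m s = 0 := fun s hs => prim_zero_of_nonpos hz hs
lemma H_cont : Continuous (Hf m) := intervalIntegral.continuous_primitive (m_int hmono hz) 0
lemma H_int : ∀ a b, IntervalIntegrable (Hf m) volume a b := fun a b =>
  ((H_cont hmono hz)).intervalIntegrable a b

lemma K_mono : Monotone (Kf m) := prim_mono (H_int hmono hz) (H_nonneg hmono hz)
lemma K_nonneg : ∀ s, 0 ≤ Kf m s :=
  prim_nonneg (H_int hmono hz) (H_nonneg hmono hz) (H_zero hmono hz)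
lemma K_zero : ∀ s ≤ 0, Kf m s = 0 := fun s hs =>
  prim_zero_of_nonpos (H_zero hmono hz) hs
lemma K_cont : Continuous (Kf m) := intervalIntegral.continuous_primitive (H_int hmono hz) 0
lemma K_int : ∀ a b, IntervalIntegrable (Kf m) volume a b := fun a b =>
  ((K_cont hmono hz)).intervalIntegrable a b
lemma K_deriv (s : ℝ) : HasDerivAt (Kf m) (Hf m s) s :=
  ((H_cont hmono hz).integral_hasStrictDerivAt 0 s).hasDerivAt

lemma L_mono : Monotone (Lf m) := prim_mono (K_int hmono hz) (K_nonneg hmono hz)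
lemma L_nonneg : ∀ s, 0 ≤ Lf m s :=
  prim_nonneg (K_int hmono hz) (K_nonneg hmono hz) (K_zero hmono hz)
lemma L_cont : Continuous (Lf m) := intervalIntegral.continuous_primitive (K_int hmono hz) 0
lemma L_deriv (s : ℝ) : HasDerivAt (Lf m) (Kf m s) s :=
  ((K_cont hmono hz).integral_hasStrictDerivAt 0 s).hasDerivAt

lemma L_lower : ∀ s : ℝ, 0 ≤ s → s ^ 3 * m s ≤ Lf m (4 * s) := by
  intro s hs
  have h1 : (2*s - s) * m s ≤ Hf m (2*s) :=
    prim_lower (m_int hmono hz) (m_nonneg hmono hz) hz hmono hs (by linarith)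
  have h2 : (3*s - 2*s) * Hf m (2*s) ≤ Kf m (3*s) :=
    prim_lower (H_int hmono hz) (H_nonneg hmono hz) (H_zero hmono hz) (H_mono hmono hz)
      (by linarith) (by linarith)
  have h3 : (4*s - 3*s) * Kf m (3*s) ≤ Lf m (4*s) :=
    prim_lower (K_int hmono hz) (K_nonneg hmono hz) (K_zero hmono hz) (K_mono hmono hz)
      (by linarith) (by linarith)
  have hm := m_nonneg hmono hz s
  have hH := H_nonneg hmono hz (2*s)
  have hK := K_nonneg hmono hz (3*s)
  nlinarith [mul_le_mul_of_nonneg_left h1 hs, mul_le_mul_of_nonneg_left h2 hs]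

lemma HKL_upper {η s₀ : ℝ} (hη : ∀ u, 0 ≤ u → u ≤ s₀ → m u ≤ η * u) :
    ∀ s, 0 ≤ s → s ≤ s₀ →
      Hf m s ≤ η * s ^ 2 / 2 ∧ Kf m s ≤ η * s ^ 3 / 6 ∧ Lf m s ≤ η * s ^ 4 / 24 := by
  have hH : ∀ u, 0 ≤ u → u ≤ s₀ → Hf m u ≤ η * u ^ 2 / 2 := by
    intro u hu huu
    have := prim_upper (m_int hmono hz) (c := η) (n := 1) hu
      (fun w hw hws => by simpa using hη w hw (hws.trans huu))
    exact this.trans (le_of_eq (by push_cast; ring))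
  have hK : ∀ u, 0 ≤ u → u ≤ s₀ → Kf m u ≤ η * u ^ 3 / 6 := by
    intro u hu huu
    have := prim_upper (H_int hmono hz) (c := η/2) (n := 2) hu
      (fun w hw hws => by
        have := hH w hw (hws.trans huu); linarith)
    exact this.trans (le_of_eq (by push_cast; ring))
  have hL : ∀ u, 0 ≤ u → u ≤ s₀ → Lf m u ≤ η * u ^ 4 / 24 := by
    intro u hu huu
    have := prim_upper (K_int hmono hz) (c := η/6) (n := 3) hu
      (fun w hw hws => by
        have := hK w hw (hws.trans huu); linarith)
    exact this.trans (le_of_eq (by push_cast; ring))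
  exact fun s hs hss => ⟨hH s hs hss, hK s hs hss, hL s hs hss⟩


lemma psi_nonneg (σ : ℝ) : 0 ≤ psi m σ :=
  div_nonneg (L_nonneg hmono hz _) (pow_nonneg (Real.sqrt_nonneg σ) 3)

lemma psi_lower {σ : ℝ} (hσ : 0 < σ) : m (Real.sqrt σ) ≤ psi m σ := by
  have hs : 0 < Real.sqrt σ := Real.sqrt_pos.2 hσ
  have hlow := L_lower hmono hz (Real.sqrt σ) hs.le
  show m (Real.sqrt σ) ≤ Lf m (4 * Real.sqrt σ) / (Real.sqrt σ) ^ 3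
  rw [le_div_iff₀ (pow_pos hs 3), mul_comm]
  exact hlow

lemma psi_hasDeriv_sq {s : ℝ} (hs : 0 < s) : HasDerivAt (psi m) (D1 m (s ^ 2)) (s ^ 2) := by
  have hσ : 0 < s ^ 2 := by positivity
  have hsq : Real.sqrt (s ^ 2) = s := Real.sqrt_sq hs.le
  have hsne : Real.sqrt (s ^ 2) ≠ 0 := by rw [hsq]; exact hs.ne'
  have hsqd : HasDerivAt Real.sqrt (1 / (2 * Real.sqrt (s ^ 2))) (s ^ 2) :=
    Real.hasDerivAt_sqrt hσ.ne'
  have h4 : HasDerivAt (fun y => 4 * Real.sqrt y) (4 * (1 / (2 * Real.sqrt (s ^ 2)))) (s ^ 2) :=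
    hsqd.const_mul 4
  have hnum : HasDerivAt (fun y => Lf m (4 * Real.sqrt y))
      (Kf m (4 * Real.sqrt (s ^ 2)) * (4 * (1 / (2 * Real.sqrt (s ^ 2))))) (s ^ 2) :=
    (L_deriv hmono hz (4 * Real.sqrt (s ^ 2))).comp (s ^ 2) h4
  have hden := hsqd.fun_pow 3
  have H := hnum.fun_div hden (pow_ne_zero 3 hsne)
  convert H using 1
  show D1 m (s ^ 2) = _
  simp only [D1, hsq]
  field_simp
  ring
  all_goals rfl

lemma psi_hasDeriv {σ : ℝ} (hσ : 0 < σ) : HasDerivAt (psi m) (D1 m σ) σ := by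
  have h := psi_hasDeriv_sq hmono hz (s := Real.sqrt σ) (Real.sqrt_pos.2 hσ)
  rwa [Real.sq_sqrt hσ.le] at h

lemma D1_hasDeriv_sq {s : ℝ} (hs : 0 < s) : HasDerivAt (D1 m) (D2 m (s ^ 2)) (s ^ 2) := by
  have hσ : 0 < s ^ 2 := by positivity
  have hsq : Real.sqrt (s ^ 2) = s := Real.sqrt_sq hs.le
  have hsne : Real.sqrt (s ^ 2) ≠ 0 := by rw [hsq]; exact hs.ne'
  have hsqd : HasDerivAt Real.sqrt (1 / (2 * Real.sqrt (s ^ 2))) (s ^ 2) :=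
    Real.hasDerivAt_sqrt hσ.ne'
  have h4 : HasDerivAt (fun y => 4 * Real.sqrt y) (4 * (1 / (2 * Real.sqrt (s ^ 2)))) (s ^ 2) :=
    hsqd.const_mul 4
  have hnum1 : HasDerivAt (fun y => 2 * Kf m (4 * Real.sqrt y))
      (2 * (Hf m (4 * Real.sqrt (s ^ 2)) * (4 * (1 / (2 * Real.sqrt (s ^ 2)))))) (s ^ 2) :=
    (((K_deriv hmono hz (4 * Real.sqrt (s ^ 2))).comp (s ^ 2) h4)).const_mul 2
  have hnum2 : HasDerivAt (fun y => (3/2 : ℝ) * Lf m (4 * Real.sqrt y))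
      ((3/2 : ℝ) * (Kf m (4 * Real.sqrt (s ^ 2)) * (4 * (1 / (2 * Real.sqrt (s ^ 2)))))) (s ^ 2) :=
    (((L_deriv hmono hz (4 * Real.sqrt (s ^ 2))).comp (s ^ 2) h4)).const_mul (3/2)
  have hden4 := hsqd.fun_pow 4
  have hden5 := hsqd.fun_pow 5
  have H := (hnum1.fun_div hden4 (pow_ne_zero 4 hsne)).fun_sub
    (hnum2.fun_div hden5 (pow_ne_zero 5 hsne))
  convert H using 1
  show D2 m (s ^ 2) = _
  simp only [D2, hsq]
  field_simp
  ring
  all_goals rfl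

lemma D1_hasDeriv {σ : ℝ} (hσ : 0 < σ) : HasDerivAt (D1 m) (D2 m σ) σ := by
  have h := D1_hasDeriv_sq hmono hz (s := Real.sqrt σ) (Real.sqrt_pos.2 hσ)
  rwa [Real.sq_sqrt hσ.le] at h

lemma psi_contAt {σ : ℝ} (hσ : 0 < σ) : ContinuousAt (psi m) σ :=
  (psi_hasDeriv hmono hz hσ).continuousAt

lemma D1_contAt {σ : ℝ} (hσ : 0 < σ) : ContinuousAt (D1 m) σ :=
  (D1_hasDeriv hmono hz hσ).continuousAt

lemma D2_contAt {σ : ℝ} (hσ : 0 < σ) : ContinuousAt (D2 m) σ := by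
  have hs : 0 < Real.sqrt σ := Real.sqrt_pos.2 hσ
  have hsne : Real.sqrt σ ≠ 0 := hs.ne'
  have c4 : ContinuousAt (fun y : ℝ => 4 * Real.sqrt y) σ :=
    (continuous_const.mul Real.continuous_sqrt).continuousAt
  unfold D2
  refine ContinuousAt.add (ContinuousAt.sub (ContinuousAt.div ?_ ?_ ?_)
    (ContinuousAt.div ?_ ?_ ?_)) (ContinuousAt.div ?_ ?_ ?_)
  · exact continuousAt_const.mul ((H_cont hmono hz).continuousAt.comp c4)
  · exact ((Real.continuous_sqrt.pow 5).continuousAt)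
  · exact pow_ne_zero 5 hsne
  · exact continuousAt_const.mul ((K_cont hmono hz).continuousAt.comp c4)
  · exact ((Real.continuous_sqrt.pow 6).continuousAt)
  · exact pow_ne_zero 6 hsne
  · exact continuousAt_const.mul ((L_cont hmono hz).continuousAt.comp c4)
  · exact ((Real.continuous_sqrt.pow 7).continuousAt)
  · exact pow_ne_zero 7 hsne

lemma psiD_bounds {η s₀ : ℝ} (hs₀ : 0 < s₀) (hηnn : 0 ≤ η)
    (hη : ∀ u, 0 ≤ u → u ≤ s₀ → m u ≤ η * u) :
    ∀ s : ℝ, 0 < s → 4 * s ≤ s₀ →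
      psi m (s ^ 2) ≤ 11 * η * s ∧ |D1 m (s ^ 2)| * s ≤ 38 * η ∧
        |D2 m (s ^ 2)| * s ^ 3 ≤ 147 * η := by
  intro s hs h4s
  have hsq : Real.sqrt (s ^ 2) = s := Real.sqrt_sq hs.le
  obtain ⟨HB, KB, LB⟩ := HKL_upper hmono hz hη (4 * s) (by positivity) h4s
  have Hn := H_nonneg hmono hz (4 * s)
  have Kn := K_nonneg hmono hz (4 * s)
  have Ln := L_nonneg hmono hz (4 * s)
  have HB' : Hf m (4 * s) ≤ 8 * η * s ^ 2 := by nlinarith [HB]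
  have KB' : Kf m (4 * s) ≤ (32/3) * η * s ^ 3 := by nlinarith [KB]
  have LB' : Lf m (4 * s) ≤ (32/3) * η * s ^ 4 := by nlinarith [LB]
  refine ⟨?_, ?_, ?_⟩
  · show Lf m (4 * Real.sqrt (s ^ 2)) / (Real.sqrt (s ^ 2)) ^ 3 ≤ 11 * η * s
    rw [hsq, div_le_iff₀ (pow_pos hs 3)]
    nlinarith [pow_pos hs 4]
  · have e1 : D1 m (s ^ 2) * s = (2 * Kf m (4 * s) * s - (3/2) * Lf m (4 * s)) / s ^ 4 := by
      simp only [D1, hsq]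
      field_simp
    have habs : |D1 m (s ^ 2)| * s = |D1 m (s ^ 2) * s| := by
      rw [abs_mul, abs_of_pos hs]
    rw [habs, e1, abs_div, abs_of_pos (pow_pos hs 4), div_le_iff₀ (pow_pos hs 4)]
    have h1 : 2 * Kf m (4 * s) * s ≤ 2 * ((32/3) * η * s ^ 3) * s :=
      mul_le_mul_of_nonneg_right (by linarith) hs.le
    have h0 : 0 ≤ 2 * Kf m (4 * s) * s := by positivity
    apply abs_le.2
    constructor <;> nlinarith [pow_pos hs 4]
  · have e2 : D2 m (s ^ 2) * s ^ 3 =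
        (4 * Hf m (4 * s) * s ^ 2 - 7 * Kf m (4 * s) * s + (15/4) * Lf m (4 * s)) / s ^ 4 := by
      simp only [D2, hsq]
      field_simp
    have habs : |D2 m (s ^ 2)| * s ^ 3 = |D2 m (s ^ 2) * s ^ 3| := by
      rw [abs_mul, abs_of_pos (pow_pos hs 3)]
    rw [habs, e2, abs_div, abs_of_pos (pow_pos hs 4), div_le_iff₀ (pow_pos hs 4)]
    have h1 : 4 * Hf m (4 * s) * s ^ 2 ≤ 4 * (8 * η * s ^ 2) * s ^ 2 :=
      mul_le_mul_of_nonneg_right (by linarith) (sq_nonneg s)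
    have h2 : 7 * Kf m (4 * s) * s ≤ 7 * ((32/3) * η * s ^ 3) * s :=
      mul_le_mul_of_nonneg_right (by linarith) hs.le
    have h3 : 0 ≤ 7 * Kf m (4 * s) * s := by positivity
    have h4 : 0 ≤ 4 * Hf m (4 * s) * s ^ 2 := by positivity
    have h5 : 0 ≤ η * s ^ 4 := by positivity
    apply abs_le.2
    constructor <;> linarith


/-! ### 2-D layer -/

def Pg : ℝ × ℝ → ℝ := fun h => h.1 ^ 2 + h.2 ^ 4
def rho0 (m : ℝ → ℝ) : ℝ × ℝ → ℝ := fun h => psi m (Pg h)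
def R1 (m : ℝ → ℝ) : ℝ × ℝ → ℝ := fun h => D1 m (Pg h) * (2 * h.1)
def R2 (m : ℝ → ℝ) : ℝ × ℝ → ℝ := fun h => D1 m (Pg h) * (4 * h.2 ^ 3)
def R3 (m : ℝ → ℝ) : ℝ × ℝ → ℝ := fun h =>
  D2 m (Pg h) * (4 * h.2 ^ 3) * (4 * h.2 ^ 3) + D1 m (Pg h) * (12 * h.2 ^ 2)

omit hmono hz

lemma Pg_nonneg (h : ℝ × ℝ) : 0 ≤ Pg h := by
  have h1 := sq_nonneg h.1
  have h2 : (0:ℝ) ≤ h.2 ^ 4 := by positivity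
  simp only [Pg]; linarith

lemma Pg_pos {h : ℝ × ℝ} (hh : h ≠ 0) : 0 < Pg h := by
  rcases lt_or_eq_of_le (Pg_nonneg h) with h1 | h1
  · exact h1
  · exfalso
    apply hh
    have ha := sq_nonneg h.1
    have hb' : (0:ℝ) ≤ h.2 ^ 4 := by positivity
    have hPg : Pg h = h.1 ^ 2 + h.2 ^ 4 := rfl
    have h2a : h.1 ^ 2 = 0 := by rw [hPg] at h1; linarith
    have h2b : h.2 ^ 4 = 0 := by rw [hPg] at h1; linarith
    have e1 : h.1 = 0 := by
      exact pow_eq_zero_iff (n := 2) (by norm_num) |>.1 h2a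
    have e2 : h.2 = 0 := by
      exact pow_eq_zero_iff (n := 4) (by norm_num) |>.1 h2b
    exact Prod.ext e1 e2

lemma abs_fst_le_sqrt_Pg (h : ℝ × ℝ) : |h.1| ≤ Real.sqrt (Pg h) := by
  rw [← Real.sqrt_sq_eq_abs]
  exact Real.sqrt_le_sqrt (by simp [Pg]; positivity)

lemma sq_snd_le_sqrt_Pg (h : ℝ × ℝ) : h.2 ^ 2 ≤ Real.sqrt (Pg h) := by
  have : h.2 ^ 2 = Real.sqrt ((h.2 ^ 2) ^ 2) := (Real.sqrt_sq (sq_nonneg _)).symm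
  rw [this]
  exact Real.sqrt_le_sqrt (by simp [Pg]; nlinarith [sq_nonneg h.1])

lemma sqrt_Pg_le (h : ℝ × ℝ) : Real.sqrt (Pg h) ≤ |h.1| + h.2 ^ 2 := by
  rw [show Pg h = h.1 ^ 2 + h.2 ^ 4 from rfl]
  have h1 : h.1 ^ 2 + h.2 ^ 4 ≤ (|h.1| + h.2 ^ 2) ^ 2 := by
    have : |h.1| ^ 2 = h.1 ^ 2 := sq_abs h.1
    nlinarith [abs_nonneg h.1, sq_nonneg h.2, mul_nonneg (abs_nonneg h.1) (sq_nonneg h.2)]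
  calc Real.sqrt (h.1 ^ 2 + h.2 ^ 4) ≤ Real.sqrt ((|h.1| + h.2 ^ 2) ^ 2) :=
        Real.sqrt_le_sqrt h1
    _ = |h.1| + h.2 ^ 2 := Real.sqrt_sq (by positivity)

lemma rho0_zero : rho0 m 0 = 0 := by
  simp [rho0, Pg, psi]

lemma eventually_sqrt_Pg_lt {d : ℝ} (hd : 0 < d) :
    ∀ᶠ h : ℝ × ℝ in 𝓝 0, Real.sqrt (Pg h) < d := by
  have hc : Continuous fun h : ℝ × ℝ => Real.sqrt (Pg h) := by
    apply Real.continuous_sqrt.comp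
    exact ((continuous_fst.pow 2).add (continuous_snd.pow 4))
  have ht : Tendsto (fun h : ℝ × ℝ => Real.sqrt (Pg h)) (𝓝 0) (𝓝 0) := by
    have := hc.tendsto 0
    simpa [Pg] using this
  exact ht.eventually_lt_const hd

include hmono hz

variable (hsm : ∀ η : ℝ, 0 < η → ∃ s₀ : ℝ, 0 < s₀ ∧ ∀ u, 0 ≤ u → u ≤ s₀ → m u ≤ η * u)
include hsm

lemma master_bound : ∀ η : ℝ, 0 < η → ∃ d : ℝ, 0 < d ∧ ∀ h : ℝ × ℝ,
    Real.sqrt (Pg h) ≤ d →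
      rho0 m h ≤ 11 * η * (|h.1| + h.2 ^ 2) ∧ |R1 m h| ≤ 76 * η ∧
      |R2 m h| ≤ 152 * η * |h.2| ∧ |R3 m h| ≤ 2808 * η := by
  intro η hη
  obtain ⟨s₀, hs₀, hb⟩ := hsm η hη
  refine ⟨s₀ / 4, by positivity, fun h hd => ?_⟩
  by_cases hh : h = (0 : ℝ × ℝ)
  · subst hh
    have e0 : rho0 m 0 = 0 := rho0_zero
    have e1 : R1 m 0 = 0 := by simp [R1]
    have e2 : R2 m 0 = 0 := by simp [R2]
    have e3 : R3 m 0 = 0 := by simp [R3]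
    rw [e0, e1, e2, e3]
    norm_num
    positivity
  · set s := Real.sqrt (Pg h) with hs_def
    have hP : 0 < Pg h := Pg_pos hh
    have hs : 0 < s := Real.sqrt_pos.2 hP
    have hPs : Pg h = s ^ 2 := (Real.sq_sqrt (Pg_nonneg h)).symm
    obtain ⟨b1, b2, b3⟩ := psiD_bounds hmono hz hs₀ hη.le hb s hs (by linarith)
    have h1s : |h.1| ≤ s := abs_fst_le_sqrt_Pg h
    have h2s : h.2 ^ 2 ≤ s := sq_snd_le_sqrt_Pg h
    have hD1 : 0 ≤ |D1 m (s ^ 2)| := abs_nonneg _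
    have hD2 : 0 ≤ |D2 m (s ^ 2)| := abs_nonneg _
    refine ⟨?_, ?_, ?_, ?_⟩
    · show psi m (Pg h) ≤ _
      rw [hPs]
      calc psi m (s ^ 2) ≤ 11 * η * s := b1
        _ ≤ 11 * η * (|h.1| + h.2 ^ 2) := by
            have := sqrt_Pg_le h
            nlinarith
    · show |D1 m (Pg h) * (2 * h.1)| ≤ 76 * η
      rw [hPs, abs_mul]
      have : |(2 : ℝ) * h.1| ≤ 2 * s := by
        rw [abs_mul, abs_two]
        nlinarith
      nlinarith [abs_nonneg (D1 m (s^2)), abs_nonneg ((2:ℝ) * h.1)]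
    · show |D1 m (Pg h) * (4 * h.2 ^ 3)| ≤ 152 * η * |h.2|
      rw [hPs, abs_mul]
      have e3 : |(4:ℝ) * h.2 ^ 3| = 4 * (|h.2| * h.2 ^ 2) := by
        rw [abs_mul, abs_pow, show |(4:ℝ)| = 4 from by norm_num,
          show |h.2| ^ 3 = |h.2| * |h.2| ^ 2 from by ring, sq_abs]
      rw [e3]
      have hy2 : |h.2| * h.2 ^ 2 ≤ |h.2| * s := by
        apply mul_le_mul_of_nonneg_left h2s (abs_nonneg _)
      calc |D1 m (s ^ 2)| * (4 * (|h.2| * h.2 ^ 2))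
          ≤ |D1 m (s ^ 2)| * (4 * (|h.2| * s)) := by
            apply mul_le_mul_of_nonneg_left _ hD1
            nlinarith [abs_nonneg h.2]
        _ = 4 * |h.2| * (|D1 m (s ^ 2)| * s) := by ring
        _ ≤ 4 * |h.2| * (38 * η) := by
            apply mul_le_mul_of_nonneg_left b2 (by positivity)
        _ = 152 * η * |h.2| := by ring
    · show |D2 m (Pg h) * (4 * h.2 ^ 3) * (4 * h.2 ^ 3) + D1 m (Pg h) * (12 * h.2 ^ 2)| ≤ 2808 * η
      rw [hPs]
      have t1 : |D2 m (s ^ 2) * (4 * h.2 ^ 3) * (4 * h.2 ^ 3)| ≤ 2352 * η := by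
        rw [abs_mul, abs_mul]
        have h6 : |(4:ℝ) * h.2 ^ 3| * |(4:ℝ) * h.2 ^ 3| ≤ 16 * s ^ 3 := by
          rw [← abs_mul]
          have e : ((4:ℝ) * h.2 ^ 3) * (4 * h.2 ^ 3) = 16 * (h.2 ^ 2) ^ 3 := by ring
          rw [e, abs_mul]
          have : |((h.2:ℝ) ^ 2) ^ 3| = (h.2 ^ 2) ^ 3 := abs_of_nonneg (by positivity)
          rw [this]
          have : (h.2 ^ 2) ^ 3 ≤ s ^ 3 := pow_le_pow_left₀ (sq_nonneg _) h2s 3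
          norm_num
          linarith
        calc |D2 m (s ^ 2)| * |(4:ℝ) * h.2 ^ 3| * |(4:ℝ) * h.2 ^ 3|
            = |D2 m (s ^ 2)| * (|(4:ℝ) * h.2 ^ 3| * |(4:ℝ) * h.2 ^ 3|) := by ring
          _ ≤ |D2 m (s ^ 2)| * (16 * s ^ 3) := mul_le_mul_of_nonneg_left h6 hD2
          _ = 16 * (|D2 m (s ^ 2)| * s ^ 3) := by ring
          _ ≤ 16 * (147 * η) := mul_le_mul_of_nonneg_left b3 (by norm_num)
          _ = 2352 * η := by ring
      have t2 : |D1 m (s ^ 2) * (12 * h.2 ^ 2)| ≤ 456 * η := by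
        rw [abs_mul]
        have h12 : |(12:ℝ) * h.2 ^ 2| ≤ 12 * s := by
          rw [abs_mul]
          have : |(h.2:ℝ) ^ 2| = h.2 ^ 2 := abs_of_nonneg (sq_nonneg _)
          rw [this]
          norm_num
          linarith
        calc |D1 m (s ^ 2)| * |(12:ℝ) * h.2 ^ 2|
            ≤ |D1 m (s ^ 2)| * (12 * s) := mul_le_mul_of_nonneg_left h12 hD1
          _ = 12 * (|D1 m (s ^ 2)| * s) := by ring
          _ ≤ 12 * (38 * η) := mul_le_mul_of_nonneg_left b2 (by norm_num)
          _ = 456 * η := by ring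
      calc |D2 m (s ^ 2) * (4 * h.2 ^ 3) * (4 * h.2 ^ 3) + D1 m (s ^ 2) * (12 * h.2 ^ 2)|
          ≤ |D2 m (s ^ 2) * (4 * h.2 ^ 3) * (4 * h.2 ^ 3)| + |D1 m (s ^ 2) * (12 * h.2 ^ 2)| :=
            abs_add_le _ _
        _ ≤ 2352 * η + 456 * η := add_le_add t1 t2
        _ = 2808 * η := by ring


omit hmono hz hsm

lemma Pg_cont : Continuous Pg := (continuous_fst.pow 2).add (continuous_snd.pow 4)

lemma tendsto_zero_of_small {F : ℝ × ℝ → ℝ}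
    (hb : ∀ η : ℝ, 0 < η → ∀ᶠ h : ℝ × ℝ in 𝓝 0, |F h| ≤ η) :
    Tendsto F (𝓝 0) (𝓝 0) := by
  rw [NormedAddCommGroup.tendsto_nhds_zero]
  intro ε hε
  filter_upwards [hb (ε/2) (by linarith)] with h hh
  rw [Real.norm_eq_abs]
  linarith

lemma hasDerivAt_zero_of_small {F : ℝ → ℝ} (h0 : F 0 = 0)
    (hb : ∀ η : ℝ, 0 < η → ∀ᶠ s : ℝ in 𝓝 0, |F s| ≤ η * |s|) : HasDerivAt F 0 0 := by
  rw [hasDerivAt_iff_isLittleO]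
  simp only [h0, sub_zero, smul_zero, mul_zero, smul_eq_mul]
  rw [isLittleO_iff]
  intro c hc
  filter_upwards [hb c hc] with s hs
  simpa [Real.norm_eq_abs] using hs

lemma ev_norm_lt {ε : ℝ} (hε : 0 < ε) : ∀ᶠ h : ℝ × ℝ in 𝓝 0, ‖h‖ < ε := by
  have hball := Metric.ball_mem_nhds (0 : ℝ × ℝ) hε
  refine Filter.eventually_of_mem hball ?_
  intro y hy
  simpa [Metric.mem_ball, dist_zero_right] using hy

lemma tendsto_incl_fst : Tendsto (fun s : ℝ => ((s, 0) : ℝ × ℝ)) (𝓝 0) (𝓝 0) := by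
  have := (continuous_id.prodMk (continuous_const (y := (0:ℝ)))).tendsto (0:ℝ)
  exact this

lemma tendsto_incl_snd : Tendsto (fun y : ℝ => ((0, y) : ℝ × ℝ)) (𝓝 0) (𝓝 0) := by
  have := ((continuous_const (y := (0:ℝ))).prodMk continuous_id).tendsto (0:ℝ)
  exact this

include hmono hz

lemma rho0_nonneg (h : ℝ × ℝ) : 0 ≤ rho0 m h := psi_nonneg hmono hz (Pg h)

lemma rho0_ge (h : ℝ × ℝ) : m (Real.sqrt (Pg h)) ≤ rho0 m h := by
  by_cases hh : h = 0
  · subst hh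
    rw [rho0_zero]
    have : Pg (0 : ℝ × ℝ) = 0 := by simp [Pg]
    rw [this, Real.sqrt_zero, hz 0 le_rfl]
  · exact psi_lower hmono hz (Pg_pos hh)

lemma rho0_hasDeriv_fst_ne {h : ℝ × ℝ} (hh : h ≠ 0) :
    HasDerivAt (fun s => rho0 m (s, h.2)) (R1 m h) h.1 := by
  have hP : 0 < Pg h := Pg_pos hh
  have hinner : HasDerivAt (fun s : ℝ => s ^ 2 + h.2 ^ 4) (2 * h.1) h.1 := by
    simpa using (hasDerivAt_pow 2 h.1).add_const (h.2 ^ 4)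
  exact (psi_hasDeriv hmono hz hP).comp h.1 hinner

lemma rho0_hasDeriv_snd_ne {h : ℝ × ℝ} (hh : h ≠ 0) :
    HasDerivAt (fun y => rho0 m (h.1, y)) (R2 m h) h.2 := by
  have hP : 0 < Pg h := Pg_pos hh
  have hinner : HasDerivAt (fun y : ℝ => h.1 ^ 2 + y ^ 4) (4 * h.2 ^ 3) h.2 := by
    simpa using (hasDerivAt_pow 4 h.2).const_add (h.1 ^ 2)
  exact (psi_hasDeriv hmono hz hP).comp h.2 hinner

lemma R2_hasDeriv_snd_ne {h : ℝ × ℝ} (hh : h ≠ 0) :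
    HasDerivAt (fun y => R2 m (h.1, y)) (R3 m h) h.2 := by
  have hP : 0 < Pg h := Pg_pos hh
  have hinner : HasDerivAt (fun y : ℝ => h.1 ^ 2 + y ^ 4) (4 * h.2 ^ 3) h.2 := by
    simpa using (hasDerivAt_pow 4 h.2).const_add (h.1 ^ 2)
  have hD1c : HasDerivAt (fun y : ℝ => D1 m (h.1 ^ 2 + y ^ 4))
      (D2 m (Pg h) * (4 * h.2 ^ 3)) h.2 :=
    by have := (D1_hasDeriv hmono hz (σ := h.1 ^ 2 + h.2 ^ 4) hP).comp h.2 hinner; exact this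
  have hpoly : HasDerivAt (fun y : ℝ => 4 * y ^ 3) (12 * h.2 ^ 2) h.2 := by
    have := (hasDerivAt_pow 3 h.2).const_mul (4 : ℝ)
    rw [show (12:ℝ) * h.2 ^ 2 = 4 * (((3:ℕ):ℝ) * h.2 ^ (3 - 1)) by push_cast; ring]
    exact this
  exact hD1c.mul hpoly

include hsm

lemma rho0_hasDeriv_fst_zero :
    HasDerivAt (fun s => rho0 m (s, (0:ℝ))) 0 0 := by
  apply hasDerivAt_zero_of_small
  · exact rho0_zero
  · intro η hη
    obtain ⟨d, hd, hmb⟩ := master_bound hmono hz hsm (η/11) (by linarith)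
    filter_upwards [tendsto_incl_fst.eventually (eventually_sqrt_Pg_lt hd)] with s hs
    have hb := (hmb (s, 0) hs.le).1
    have hnn := rho0_nonneg hmono hz ((s, 0) : ℝ × ℝ)
    rw [abs_of_nonneg hnn]
    calc rho0 m (s, 0) ≤ 11 * (η/11) * (|s| + (0:ℝ) ^ 2) := hb
      _ = η * |s| := by ring

lemma rho0_hasDeriv_snd_zero :
    HasDerivAt (fun y => rho0 m ((0:ℝ), y)) 0 0 := by
  apply hasDerivAt_zero_of_small
  · exact rho0_zero
  · intro η hη
    obtain ⟨d, hd, hmb⟩ := master_bound hmono hz hsm (η/11) (by linarith)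
    filter_upwards [tendsto_incl_snd.eventually (eventually_sqrt_Pg_lt hd),
      tendsto_incl_snd.eventually (ev_norm_lt one_pos)] with y hy hy1
    have hb := (hmb (0, y) hy.le).1
    have hnn := rho0_nonneg hmono hz ((0, y) : ℝ × ℝ)
    have hyle : |y| ≤ 1 := by
      have h1 : ‖(((0:ℝ), y) : ℝ × ℝ).2‖ ≤ ‖(((0:ℝ), y) : ℝ × ℝ)‖ := norm_snd_le _
      rw [show (((0:ℝ), y) : ℝ × ℝ).2 = y from rfl, Real.norm_eq_abs] at h1
      linarith
    rw [abs_of_nonneg hnn]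
    have h2 : y ^ 2 ≤ |y| := by
      have : y ^ 2 = |y| * |y| := by rw [← abs_mul]; rw [abs_of_nonneg (by nlinarith : (0:ℝ) ≤ y * y)]; ring
      rw [this]
      nlinarith [abs_nonneg y]
    calc rho0 m (0, y) ≤ 11 * (η/11) * (|(0:ℝ)| + y ^ 2) := hb
      _ = η * y ^ 2 := by rw [abs_zero]; ring
      _ ≤ η * |y| := by nlinarith

lemma R2_hasDeriv_snd_zero :
    HasDerivAt (fun y => R2 m ((0:ℝ), y)) 0 0 := by
  apply hasDerivAt_zero_of_small
  · simp [R2]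
  · intro η hη
    obtain ⟨d, hd, hmb⟩ := master_bound hmono hz hsm (η/152) (by linarith)
    filter_upwards [tendsto_incl_snd.eventually (eventually_sqrt_Pg_lt hd)] with y hy
    have hb := (hmb (0, y) hy.le).2.2.1
    calc |R2 m (0, y)| ≤ 152 * (η/152) * |((0:ℝ), y).2| := hb
      _ = η * |y| := by rw [show ((0:ℝ), y).2 = y from rfl]; ring

lemma rho0_hasDeriv_fst (h : ℝ × ℝ) : HasDerivAt (fun s => rho0 m (s, h.2)) (R1 m h) h.1 := by
  by_cases hh : h = 0
  · subst hh
    have : R1 m 0 = 0 := by simp [R1]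
    rw [this]
    exact rho0_hasDeriv_fst_zero hmono hz hsm
  · exact rho0_hasDeriv_fst_ne hmono hz hh

lemma rho0_hasDeriv_snd (h : ℝ × ℝ) : HasDerivAt (fun y => rho0 m (h.1, y)) (R2 m h) h.2 := by
  by_cases hh : h = 0
  · subst hh
    have : R2 m 0 = 0 := by simp [R2]
    rw [this]
    exact rho0_hasDeriv_snd_zero hmono hz hsm
  · exact rho0_hasDeriv_snd_ne hmono hz hh

lemma R2_hasDeriv_snd (h : ℝ × ℝ) : HasDerivAt (fun y => R2 m (h.1, y)) (R3 m h) h.2 := by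
  by_cases hh : h = 0
  · subst hh
    have : R3 m 0 = 0 := by simp [R3]
    rw [this]
    exact R2_hasDeriv_snd_zero hmono hz hsm
  · exact R2_hasDeriv_snd_ne hmono hz hh

lemma rho0_cont : Continuous (rho0 m) := by
  rw [continuous_iff_continuousAt]
  intro h
  by_cases hh : h = 0
  · subst hh
    rw [ContinuousAt, rho0_zero]
    apply tendsto_zero_of_small
    intro η hη
    obtain ⟨d, hd, hmb⟩ := master_bound hmono hz hsm (η/33) (by linarith)
    filter_upwards [eventually_sqrt_Pg_lt hd, ev_norm_lt one_pos] with h hs h1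
    have hb := (hmb h hs.le).1
    have hnn := rho0_nonneg hmono hz h
    have hf : |h.1| ≤ 1 := by
      have := norm_fst_le h
      rw [Real.norm_eq_abs] at this
      linarith
    have hsn : h.2 ^ 2 ≤ 1 := by
      have := norm_snd_le h
      rw [Real.norm_eq_abs] at this
      nlinarith [abs_nonneg h.2, sq_abs h.2]
    rw [abs_of_nonneg hnn]
    calc rho0 m h ≤ 11 * (η/33) * (|h.1| + h.2 ^ 2) := hb
      _ ≤ 11 * (η/33) * 2 := by
          apply mul_le_mul_of_nonneg_left (by linarith) (by positivity)
      _ ≤ η := by linarith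
  · exact (psi_contAt hmono hz (Pg_pos hh)).comp Pg_cont.continuousAt

lemma R1_cont : Continuous (R1 m) := by
  rw [continuous_iff_continuousAt]
  intro h
  by_cases hh : h = 0
  · subst hh
    have h0 : R1 m 0 = 0 := by simp [R1]
    rw [ContinuousAt, h0]
    apply tendsto_zero_of_small
    intro η hη
    obtain ⟨d, hd, hmb⟩ := master_bound hmono hz hsm (η/76) (by linarith)
    filter_upwards [eventually_sqrt_Pg_lt hd] with h hs
    have hb := (hmb h hs.le).2.1
    calc |R1 m h| ≤ 76 * (η/76) := hb
      _ = η := by ring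
  · exact ((D1_contAt hmono hz (Pg_pos hh)).comp Pg_cont.continuousAt).mul
      (continuous_const.mul continuous_fst).continuousAt

lemma R2_cont : Continuous (R2 m) := by
  rw [continuous_iff_continuousAt]
  intro h
  by_cases hh : h = 0
  · subst hh
    have h0 : R2 m 0 = 0 := by simp [R2]
    rw [ContinuousAt, h0]
    apply tendsto_zero_of_small
    intro η hη
    obtain ⟨d, hd, hmb⟩ := master_bound hmono hz hsm (η/304) (by linarith)
    filter_upwards [eventually_sqrt_Pg_lt hd, ev_norm_lt one_pos] with h hs h1
    have hb := (hmb h hs.le).2.2.1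
    have hsn : |h.2| ≤ 1 := by
      have := norm_snd_le h
      rw [Real.norm_eq_abs] at this
      linarith
    calc |R2 m h| ≤ 152 * (η/304) * |h.2| := hb
      _ ≤ 152 * (η/304) * 1 := by
          apply mul_le_mul_of_nonneg_left hsn (by positivity)
      _ ≤ η := by linarith
  · exact ((D1_contAt hmono hz (Pg_pos hh)).comp Pg_cont.continuousAt).mul
      (continuous_const.mul (continuous_snd.pow 3)).continuousAt

lemma R3_cont : Continuous (R3 m) := by
  rw [continuous_iff_continuousAt]
  intro h
  by_cases hh : h = 0
  · subst hh
    have h0 : R3 m 0 = 0 := by simp [R3]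
    rw [ContinuousAt, h0]
    apply tendsto_zero_of_small
    intro η hη
    obtain ⟨d, hd, hmb⟩ := master_bound hmono hz hsm (η/2808) (by linarith)
    filter_upwards [eventually_sqrt_Pg_lt hd] with h hs
    have hb := (hmb h hs.le).2.2.2
    calc |R3 m h| ≤ 2808 * (η/2808) := hb
      _ = η := by ring
  · have c1 : ContinuousAt (fun h : ℝ × ℝ => D2 m (Pg h)) h :=
      (D2_contAt hmono hz (Pg_pos hh)).comp Pg_cont.continuousAt
    have c2 : ContinuousAt (fun h : ℝ × ℝ => D1 m (Pg h)) h :=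
      (D1_contAt hmono hz (Pg_pos hh)).comp Pg_cont.continuousAt
    have c3 : ContinuousAt (fun h : ℝ × ℝ => (4 : ℝ) * h.2 ^ 3) h :=
      (continuous_const.mul (continuous_snd.pow 3)).continuousAt
    have c4 : ContinuousAt (fun h : ℝ × ℝ => (12 : ℝ) * h.2 ^ 2) h :=
      (continuous_const.mul (continuous_snd.pow 2)).continuousAt
    exact ((c1.mul c3).mul c3).add (c2.mul c4)

lemma rho0_littleO :
    (rho0 m) =o[𝓝 (0 : ℝ × ℝ)] fun h : ℝ × ℝ => |h.1| + |h.2| ^ 2 := by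
  rw [isLittleO_iff]
  intro c hc
  obtain ⟨d, hd, hmb⟩ := master_bound hmono hz hsm (c/11) (by linarith)
  filter_upwards [eventually_sqrt_Pg_lt hd] with h hs
  have hb := (hmb h hs.le).1
  have hnn := rho0_nonneg hmono hz h
  rw [Real.norm_eq_abs, Real.norm_eq_abs, abs_of_nonneg hnn,
    abs_of_nonneg (by positivity : (0:ℝ) ≤ |h.1| + |h.2| ^ 2), sq_abs]
  calc rho0 m h ≤ 11 * (c/11) * (|h.1| + h.2 ^ 2) := hb
    _ = c * (|h.1| + h.2 ^ 2) := by ring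

end JetAux

section Main
open JetAux

/-- **Construction of a test function from a parabolic superjet element**
(Lemma on jets): given `v` continuous on `K = (0,T) × (0,∞)`, `(t,x) ∈ K`,
`(b,p,A) ∈ P⁺v(t,x)`, and `ε, δ ∈ (0,1]`, there are `r > 0` and a function `f`,
continuous on `K` and `C^{1,2}` near `(t,x)`, with:
(i) `f(t,x) = v(t,x)`, `f_t(t,x) = b`, `f_x(t,x) = p`, `f_{xx}(t,x) = A`;
(ii) `v ≤ f ≤ v + ε` on `K`;
(iii) `f((t,x)+h) = v(t,x) + Q_{b,p,A}(h) + ρ(h)` for `|h| < r`, with `ρ` compactly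
supported, `C^{1,2}`, and `ρ(h) = o(|h₁| + |h₂|²)`;
(iv) `f = v` on `K` outside the ball of radius `r + δ` around `(t,x)`. -/
theorem test_function_from_superjet
    (T : ℝ) (hT : 0 < T)
    (v : ℝ × ℝ → ℝ) (hv : ContinuousOn v (Ioo 0 T ×ˢ Ioi 0))
    (t x : ℝ) (ht : t ∈ Ioo 0 T) (hx : x ∈ Ioi (0 : ℝ))
    (b p A : ℝ) (hjet : (b, p, A) ∈ psuperjet v t x)
    (ε δ : ℝ) (hε : ε ∈ Ioc (0 : ℝ) 1) (hδ : δ ∈ Ioc (0 : ℝ) 1) :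
    ∃ (r : ℝ) (f : ℝ × ℝ → ℝ), 0 < r ∧
      ContinuousOn f (Ioo 0 T ×ˢ Ioi 0) ∧
      (∃ U : Set (ℝ × ℝ), IsOpen U ∧ (t, x) ∈ U ∧ C12On f U) ∧
      f (t, x) = v (t, x) ∧
      deriv (fun s => f (s, x)) t = b ∧
      deriv (fun y => f (t, y)) x = p ∧
      deriv (fun y => deriv (fun y' => f (t, y')) y) x = A ∧
      (∀ q ∈ Ioo 0 T ×ˢ Ioi (0 : ℝ), v q ≤ f q ∧ f q ≤ v q + ε) ∧
      (∃ ρ : ℝ × ℝ → ℝ, HasCompactSupport ρ ∧ C12On ρ univ ∧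
        (ρ =o[𝓝 (0 : ℝ × ℝ)] fun h : ℝ × ℝ => |h.1| + |h.2| ^ 2) ∧
        ∀ h : ℝ × ℝ, ‖h‖ < r →
          f (t + h.1, x + h.2) =
            v (t, x) + b * h.1 + p * h.2 + (1 / 2) * A * h.2 ^ 2 + ρ h) ∧
      (∀ q ∈ Ioo 0 T ×ˢ Ioi (0 : ℝ), q ∉ Metric.ball ((t, x) : ℝ × ℝ) (r + δ) → f q = v q) := by
  obtain ⟨g, hgo, hgev⟩ := hjet
  have hgev' : ∀ᶠ h : ℝ × ℝ in 𝓝 0,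
      v (t + h.1, x + h.2) ≤ v (t, x) + b * h.1 + p * h.2 + 1/2 * A * h.2 ^ 2 + g h := hgev
  have hKopen : IsOpen (Ioo (0:ℝ) T ×ˢ Ioi (0:ℝ)) := isOpen_Ioo.prod isOpen_Ioi
  have htx : ((t, x) : ℝ × ℝ) ∈ Ioo (0:ℝ) T ×ˢ Ioi (0:ℝ) := ⟨ht, hx⟩
  have hKnhds : Ioo (0:ℝ) T ×ˢ Ioi (0:ℝ) ∈ 𝓝 ((t, x) : ℝ × ℝ) := hKopen.mem_nhds htx
  obtain ⟨R₁, hR₁pos, hR₁sub⟩ := Metric.nhds_basis_closedBall.mem_iff.1 hKnhds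
  obtain ⟨R₂, hR₂pos, hR₂⟩ := Metric.eventually_nhds_iff.1 hgev'
  set R₀ : ℝ := min 1 (min R₁ (R₂ / 2)) with hR₀def
  have hR₀pos : 0 < R₀ := lt_min one_pos (lt_min hR₁pos (by linarith))
  have hR₀leR₁ : R₀ ≤ R₁ := le_trans (min_le_right _ _) (min_le_left _ _)
  have hR₀ltR₂ : R₀ < R₂ := lt_of_le_of_lt
    (le_trans (min_le_right _ _) (min_le_right _ _)) (by linarith)
  have hcb : Metric.closedBall ((t,x) : ℝ×ℝ) R₀ ⊆ Ioo (0:ℝ) T ×ˢ Ioi (0:ℝ) :=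
    fun q hq => hR₁sub (Metric.closedBall_subset_closedBall hR₀leR₁ hq)
  have hineq : ∀ h : ℝ × ℝ, ‖h‖ ≤ R₀ →
      v (t + h.1, x + h.2) ≤ v (t, x) + b * h.1 + p * h.2 + 1/2 * A * h.2 ^ 2 + g h := by
    intro h hh
    apply hR₂
    rw [dist_zero_right]
    linarith
  set u : ℝ × ℝ → ℝ := fun h =>
    v (t + h.1, x + h.2) - (v (t, x) + b * h.1 + p * h.2 + 1/2 * A * h.2 ^ 2) with hudef
  have hpairsub : ∀ q : ℝ × ℝ, q - ((t,x) : ℝ×ℝ) = (q.1 - t, q.2 - x) := fun q => rfl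
  have hmapK : ∀ h : ℝ × ℝ, ‖h‖ ≤ R₀ →
      ((t + h.1, x + h.2) : ℝ × ℝ) ∈ Ioo (0:ℝ) T ×ˢ Ioi (0:ℝ) := by
    intro h hh
    apply hcb
    rw [Metric.mem_closedBall, dist_eq_norm]
    have e : ((t + h.1, x + h.2) : ℝ×ℝ) - (t, x) = h := by
      rw [hpairsub]
      exact Prod.ext (by simp) (by simp)
    rw [e]
    exact hh
  have hshiftcont : Continuous (fun h : ℝ × ℝ => ((t + h.1, x + h.2) : ℝ × ℝ)) :=
    (continuous_const.add continuous_fst).prodMk (continuous_const.add continuous_snd)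
  have hpolycont : Continuous (fun h : ℝ×ℝ =>
      v (t, x) + b * h.1 + p * h.2 + 1/2 * A * h.2 ^ 2) := by
    apply Continuous.add
    apply Continuous.add
    apply Continuous.add continuous_const
    · exact continuous_const.mul continuous_fst
    · exact continuous_const.mul continuous_snd
    · exact continuous_const.mul (continuous_snd.pow 2)
  have hucont : ContinuousOn u (Metric.closedBall (0:ℝ×ℝ) R₀) := by
    apply ContinuousOn.sub
    · apply hv.comp hshiftcont.continuousOn
      intro h hh
      exact hmapK h (by rwa [Metric.mem_closedBall, dist_zero_right] at hh)
    · exact hpolycont.continuousOn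
  have huc0 : ContinuousAt u 0 := by
    apply ContinuousAt.sub
    · have h2 : ContinuousAt v (t, x) := hv.continuousAt hKnhds
      have h3 : Tendsto (fun h : ℝ×ℝ => ((t + h.1, x + h.2):ℝ×ℝ)) (𝓝 0) (𝓝 (t, x)) :=
        hshiftcont.tendsto' 0 (t, x) (by simp)
      have h4 : Tendsto (fun h : ℝ×ℝ => v (t + h.1, x + h.2)) (𝓝 0) (𝓝 (v (t, x))) :=
        h2.tendsto.comp h3
      unfold ContinuousAt
      convert h4 using 2
      simp
    · exact hpolycont.continuousAt
  have hu0 : u 0 = 0 := by simp [hudef]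
  obtain ⟨C, hC⟩ := (isCompact_closedBall (0:ℝ×ℝ) R₀).exists_bound_of_continuousOn hucont
  set mset : ℝ → Set ℝ := fun s =>
    insert 0 ((fun h => max (u h) 0) ''
      {h : ℝ × ℝ | h ∈ Metric.closedBall (0:ℝ×ℝ) R₀ ∧ Real.sqrt (JetAux.Pg h) ≤ s})
    with hmsetdef
  set mfun : ℝ → ℝ := fun s => sSup (mset s) with hmdef
  have hbdd : ∀ s, BddAbove (mset s) := by
    intro s
    refine ⟨max C 0, ?_⟩
    rintro y (rfl | ⟨h, ⟨hh1, _⟩, rfl⟩)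
    · exact le_max_right _ _
    · show max (u h) 0 ≤ max C 0
      have hCh := hC h hh1
      rw [Real.norm_eq_abs] at hCh
      rcases le_total (u h) 0 with h' | h'
      · rw [max_eq_right h']; exact le_max_right _ _
      · rw [max_eq_left h']
        exact le_max_of_le_left (le_trans (le_abs_self _) hCh)
  have hne : ∀ s, (mset s).Nonempty := fun s => ⟨0, mem_insert _ _⟩
  have hmmono : Monotone mfun := by
    intro a b' hab
    apply csSup_le_csSup (hbdd b') (hne a)
    rintro y (rfl | ⟨h, ⟨hh1, hh2⟩, rfl⟩)
    · exact mem_insert _ _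
    · exact mem_insert_of_mem _ ⟨h, ⟨hh1, le_trans hh2 hab⟩, rfl⟩
  have hmzero : ∀ s ≤ 0, mfun s = 0 := by
    intro s hs
    apply le_antisymm
    · apply Real.sSup_le _ le_rfl
      rintro y (rfl | ⟨h, ⟨hh1, hh2⟩, rfl⟩)
      · exact le_rfl
      · have hP0 : Real.sqrt (JetAux.Pg h) = 0 :=
          le_antisymm (le_trans hh2 hs) (Real.sqrt_nonneg _)
        have hPle : JetAux.Pg h ≤ 0 := by
          by_contra hc
          push_neg at hc
          have := Real.sqrt_pos.2 hc
          linarith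
        have hh0 : h = 0 := by
          by_contra hc
          exact absurd (JetAux.Pg_pos hc) (not_lt.2 hPle)
        subst hh0
        show max (u 0) 0 ≤ 0
        rw [hu0]
        simp
    · exact le_csSup (hbdd s) (mem_insert _ _)
  have hm_ge : ∀ h : ℝ×ℝ, ‖h‖ ≤ R₀ → max (u h) 0 ≤ mfun (Real.sqrt (JetAux.Pg h)) := by
    intro h hh
    apply le_csSup (hbdd _)
    exact mem_insert_of_mem _
      ⟨h, ⟨by rwa [Metric.mem_closedBall, dist_zero_right], le_rfl⟩, rfl⟩
  have hsm : ∀ η : ℝ, 0 < η → ∃ s₀ : ℝ, 0 < s₀ ∧ ∀ w', 0 ≤ w' → w' ≤ s₀ → mfun w' ≤ η * w' := by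
    intro η hη
    have hev := hgo.def (show (0:ℝ) < η/2 by linarith)
    obtain ⟨dg, hdgpos, hdg⟩ := Metric.eventually_nhds_iff.1 hev
    refine ⟨min (dg/2) ((dg/2)^2), by positivity, ?_⟩
    intro w' hw hws
    have hwdg : w' ≤ dg/2 := le_trans hws (min_le_left _ _)
    have hwdg2 : w' ≤ (dg/2)^2 := le_trans hws (min_le_right _ _)
    apply Real.sSup_le _ (by positivity)
    rintro y (rfl | ⟨h, ⟨hh1, hh2⟩, rfl⟩)
    · positivity
    · have h1b : |h.1| ≤ w' := le_trans (JetAux.abs_fst_le_sqrt_Pg h) hh2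
      have h2b : h.2 ^ 2 ≤ w' := le_trans (JetAux.sq_snd_le_sqrt_Pg h) hh2
      have hnormh : ‖h‖ < dg := by
        rw [Prod.norm_def]
        apply max_lt
        · rw [Real.norm_eq_abs]; linarith
        · rw [Real.norm_eq_abs]
          nlinarith [sq_abs h.2, abs_nonneg h.2]
      have hg' := hdg (show dist h 0 < dg by rwa [dist_zero_right])
      have hRh : ‖h‖ ≤ R₀ := by rwa [Metric.mem_closedBall, dist_zero_right] at hh1
      have hub : u h ≤ g h := by
        have h5 := hineq h hRh
        have he : u h = v (t + h.1, x + h.2) -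
            (v (t, x) + b * h.1 + p * h.2 + 1/2 * A * h.2 ^ 2) := rfl
        rw [he]
        linarith
      have hgb : g h ≤ η * w' := by
        have h1 : g h ≤ |g h| := le_abs_self _
        rw [Real.norm_eq_abs, Real.norm_eq_abs] at hg'
        have h2 : |(|h.1| + |h.2| ^ 2)| = |h.1| + h.2 ^ 2 := by
          rw [abs_of_nonneg (by positivity), sq_abs]
        rw [h2] at hg'
        calc g h ≤ |g h| := h1
          _ ≤ η/2 * (|h.1| + h.2 ^ 2) := hg'
          _ ≤ η/2 * (w' + w') := by
              apply mul_le_mul_of_nonneg_left (by linarith) (by linarith)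
          _ = η * w' := by ring
      show max (u h) 0 ≤ η * w'
      exact max_le (le_trans hub hgb) (by positivity)
  -- instantiate JetAux
  have hnn := JetAux.rho0_nonneg hmmono hmzero
  have hge := JetAux.rho0_ge hmmono hmzero
  have hcontρ0 : Continuous (JetAux.rho0 mfun) := JetAux.rho0_cont hmmono hmzero hsm
  have hR1cont := JetAux.R1_cont hmmono hmzero hsm
  have hR2cont := JetAux.R2_cont hmmono hmzero hsm
  have hR3cont := JetAux.R3_cont hmmono hmzero hsm
  have hD1 := JetAux.rho0_hasDeriv_fst hmmono hmzero hsm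
  have hD2 := JetAux.rho0_hasDeriv_snd hmmono hmzero hsm
  have hD3 := JetAux.R2_hasDeriv_snd hmmono hmzero hsm
  have hlo := JetAux.rho0_littleO hmmono hmzero hsm
  have hdom : ∀ h : ℝ×ℝ, ‖h‖ ≤ R₀ → u h ≤ JetAux.rho0 mfun h := by
    intro h hh
    calc u h ≤ max (u h) 0 := le_max_left _ _
      _ ≤ mfun (Real.sqrt (JetAux.Pg h)) := hm_ge h hh
      _ ≤ JetAux.rho0 mfun h := hge h
  -- small radii
  have hρat0 : ∃ d > 0, ∀ h : ℝ×ℝ, ‖h‖ ≤ d → JetAux.rho0 mfun h ≤ ε/2 := by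
    have h0 := hcontρ0.continuousAt (x := (0:ℝ×ℝ))
    rw [Metric.continuousAt_iff] at h0
    obtain ⟨d, hd, hdd⟩ := h0 (ε/2) (by linarith [hε.1])
    refine ⟨d/2, by linarith, fun h hh => ?_⟩
    have h3 := hdd (x := h) (by rw [dist_zero_right]; linarith)
    rw [Real.dist_eq, JetAux.rho0_zero, sub_zero, abs_of_nonneg (hnn h)] at h3
    linarith
  obtain ⟨d₁', hd₁'pos, hd₁'⟩ := hρat0
  have hu_small : ∃ d > 0, ∀ h : ℝ×ℝ, ‖h‖ ≤ d → |u h| ≤ ε/2 := by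
    rw [Metric.continuousAt_iff] at huc0
    obtain ⟨d, hd, hdd⟩ := huc0 (ε/2) (by linarith [hε.1])
    refine ⟨d/2, by linarith, fun h hh => ?_⟩
    have h3 := hdd (x := h) (by rw [dist_zero_right]; linarith)
    rw [Real.dist_eq, hu0, sub_zero] at h3
    linarith
  obtain ⟨d₂', hd₂'pos, hd₂'⟩ := hu_small
  set d₁ : ℝ := min R₀ (min d₁' d₂') with hd₁def
  have hd₁pos : 0 < d₁ := lt_min hR₀pos (lt_min hd₁'pos hd₂'pos)
  have hd₁R₀ : d₁ ≤ R₀ := min_le_left _ _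
  have hd₁d₁' : d₁ ≤ d₁' := le_trans (min_le_right _ _) (min_le_left _ _)
  have hd₁d₂' : d₁ ≤ d₂' := le_trans (min_le_right _ _) (min_le_right _ _)
  set r : ℝ := d₁ / 2 with hrdef
  set τ : ℝ := min δ d₁ / 2 with hτdef
  have hrpos : 0 < r := by rw [hrdef]; linarith
  have hτpos : 0 < τ := by
    rw [hτdef]
    have := lt_min hδ.1 hd₁pos
    linarith
  have hrτ : r + τ ≤ d₁ := by
    rw [hrdef, hτdef]
    have := min_le_right δ d₁
    linarith
  have hτδ : τ < δ := by
    rw [hτdef]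
    have := min_le_left δ d₁
    linarith [hδ.1]
  -- bump
  set β : ContDiffBump (0:ℝ) := ⟨r, r + τ, hrpos, by linarith⟩ with hβdef
  have hβsm : ContDiff ℝ (⊤:ℕ∞) ⇑β := β.contDiff
  have hβd : ∀ s : ℝ, HasDerivAt β (deriv β s) s :=
    fun s => ((hβsm.differentiable (by norm_num)) s).hasDerivAt
  have hβdsm : ContDiff ℝ (⊤:ℕ∞) (deriv β) := (contDiff_infty_iff_deriv.1 hβsm).2
  have hβdd : ∀ s : ℝ, HasDerivAt (deriv β) (deriv (deriv β) s) s :=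
    fun s => ((hβdsm.differentiable (by norm_num)) s).hasDerivAt
  have hβcont : Continuous β := β.continuous
  have hβdcont : Continuous (deriv β) := hβdsm.continuous
  have hβddcont : Continuous (deriv (deriv β)) := (contDiff_infty_iff_deriv.1 hβdsm).2.continuous
  have hβone : ∀ s : ℝ, |s| ≤ r → β s = 1 := by
    intro s hs
    exact β.one_of_mem_closedBall (by simpa [Metric.mem_closedBall, Real.dist_eq] using hs)
  have hβzero : ∀ s : ℝ, r + τ ≤ |s| → β s = 0 := by
    intro s hs
    have hnm : s ∉ Function.support β := by
      rw [β.support_eq]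
      simp only [Metric.mem_ball, Real.dist_eq, sub_zero]
      push_neg
      simpa using hs
    simpa [Function.mem_support, not_not] using hnm
  have hβnn : ∀ s : ℝ, 0 ≤ β s := fun s => β.nonneg
  have hβle1 : ∀ s : ℝ, β s ≤ 1 := fun s => β.le_one
  set χ : ℝ×ℝ → ℝ := fun h => β h.1 * β h.2 with hχdef
  have hχ_one : ∀ h : ℝ×ℝ, ‖h‖ ≤ r → χ h = 1 := by
    intro h hh
    have h1 : |h.1| ≤ r := by
      have := norm_fst_le h; rw [Real.norm_eq_abs] at this; linarith
    have h2 : |h.2| ≤ r := by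
      have := norm_snd_le h; rw [Real.norm_eq_abs] at this; linarith
    rw [hχdef]
    simp only
    rw [hβone _ h1, hβone _ h2, mul_one]
  have hχ_zero : ∀ h : ℝ×ℝ, r + τ ≤ ‖h‖ → χ h = 0 := by
    intro h hh
    rw [Prod.norm_def] at hh
    rw [hχdef]
    simp only
    rcases le_max_iff.1 hh with h1 | h1
    · rw [Real.norm_eq_abs] at h1
      rw [hβzero _ h1, zero_mul]
    · rw [Real.norm_eq_abs] at h1
      rw [hβzero _ h1, mul_zero]
  have hχ_nn : ∀ h : ℝ×ℝ, 0 ≤ χ h := fun h => mul_nonneg (hβnn _) (hβnn _)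
  have hχ_le1 : ∀ h : ℝ×ℝ, χ h ≤ 1 := fun h =>
    mul_le_one₀ (hβle1 _) (hβnn _) (hβle1 _)
  -- w and f
  set w : ℝ×ℝ → ℝ := fun q => v (t,x) + b*(q.1 - t) + p*(q.2 - x) + 1/2*A*(q.2-x)^2
    + JetAux.rho0 mfun (q.1 - t, q.2 - x) with hwdef
  set f : ℝ×ℝ → ℝ := fun q => v q + χ (q.1 - t, q.2 - x) * (w q - v q) with hfdef
  have hfq : ∀ q : ℝ×ℝ, f q = v q + χ (q.1 - t, q.2 - x) * (w q - v q) := fun q => rfl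
  have hwq : ∀ q : ℝ×ℝ, w q = v (t,x) + b*(q.1 - t) + p*(q.2 - x) + 1/2*A*(q.2-x)^2
    + JetAux.rho0 mfun (q.1 - t, q.2 - x) := fun q => rfl
  have hfw : ∀ q : ℝ×ℝ, ‖((q.1 - t, q.2 - x) : ℝ×ℝ)‖ ≤ r → f q = w q := by
    intro q hq
    rw [hfq, hχ_one _ hq]
    ring
  -- derivative facts for w
  have hw1 : ∀ q : ℝ×ℝ, HasDerivAt (fun s => w (s, q.2))
      (b + JetAux.R1 mfun (q.1 - t, q.2 - x)) q.1 := by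
    intro q
    have hrho : HasDerivAt (fun s : ℝ => JetAux.rho0 mfun (s - t, q.2 - x))
        (JetAux.R1 mfun (q.1 - t, q.2 - x)) q.1 := by
      have base := hD1 ((q.1 - t, q.2 - x) : ℝ×ℝ)
      have hshift : HasDerivAt (fun s : ℝ => s - t) 1 q.1 := (hasDerivAt_id q.1).sub_const t
      have := base.comp q.1 hshift
      simpa [Function.comp_def] using this
    have h1 : HasDerivAt (fun s : ℝ => b * (s - t)) b q.1 := by
      simpa using ((hasDerivAt_id q.1).sub_const t).const_mul b
    have hpoly : HasDerivAt (fun s : ℝ =>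
        v (t,x) + b*(s - t) + p*(q.2 - x) + 1/2*A*(q.2-x)^2) b q.1 :=
      ((h1.const_add (v (t,x))).add_const (p*(q.2-x))).add_const (1/2*A*(q.2-x)^2)
    exact hpoly.add hrho
  have hw2 : ∀ q : ℝ×ℝ, HasDerivAt (fun y => w (q.1, y))
      (p + A*(q.2 - x) + JetAux.R2 mfun (q.1 - t, q.2 - x)) q.2 := by
    intro q
    have hrho : HasDerivAt (fun y : ℝ => JetAux.rho0 mfun (q.1 - t, y - x))
        (JetAux.R2 mfun (q.1 - t, q.2 - x)) q.2 := by
      have base := hD2 ((q.1 - t, q.2 - x) : ℝ×ℝ)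
      have := base.comp q.2 ((hasDerivAt_id q.2).sub_const x)
      simpa [Function.comp_def] using this
    have hsq : HasDerivAt (fun y : ℝ => 1/2*A*(y - x)^2) (A * (q.2 - x)) q.2 := by
      have h2 : HasDerivAt (fun y : ℝ => (y - x)^2) (2*(q.2 - x)) q.2 := by
        have := ((hasDerivAt_id q.2).sub_const x).fun_pow 2
        simpa using this
      have h3 := h2.const_mul (1/2*A)
      rw [show A * (q.2 - x) = 1/2*A*(2*(q.2 - x)) by ring]
      exact h3
    have hlin : HasDerivAt (fun y : ℝ => p * (y - x)) p q.2 := by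
      simpa using ((hasDerivAt_id q.2).sub_const x).const_mul p
    have h0 : HasDerivAt (fun y : ℝ => v (t,x) + b*(q.1 - t) + p*(y - x)) p q.2 :=
      hlin.const_add (v (t,x) + b*(q.1 - t))
    exact (h0.add hsq).add hrho
  have hW2d : ∀ q : ℝ×ℝ, HasDerivAt
      (fun y => p + A*(y - x) + JetAux.R2 mfun (q.1 - t, y - x))
      (A + JetAux.R3 mfun (q.1 - t, q.2 - x)) q.2 := by
    intro q
    have hR2s : HasDerivAt (fun y : ℝ => JetAux.R2 mfun (q.1 - t, y - x))
        (JetAux.R3 mfun (q.1 - t, q.2 - x)) q.2 := by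
      have base := hD3 ((q.1 - t, q.2 - x) : ℝ×ℝ)
      have := base.comp q.2 ((hasDerivAt_id q.2).sub_const x)
      simpa [Function.comp_def] using this
    have hlin2 : HasDerivAt (fun y : ℝ => A * (y - x)) A q.2 := by
      simpa using ((hasDerivAt_id q.2).sub_const x).const_mul A
    exact (hlin2.const_add p).add hR2s
  -- slice facts for f near (t,x)
  have hfa : ∀ q : ℝ×ℝ, ‖((q.1 - t, q.2 - x):ℝ×ℝ)‖ < r →
      HasDerivAt (fun s => f (s, q.2)) (b + JetAux.R1 mfun (q.1 - t, q.2 - x)) q.1 := by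
    intro q hq
    have hsnd : |q.2 - x| < r := by
      have := norm_snd_le ((q.1 - t, q.2 - x):ℝ×ℝ)
      rw [Real.norm_eq_abs] at this
      exact lt_of_le_of_lt this hq
    have hsev : ∀ᶠ s : ℝ in 𝓝 q.1, |s - t| < r := by
      have hc : Continuous (fun s : ℝ => |s - t|) := (continuous_id.sub continuous_const).abs
      have hlt : |q.1 - t| < r := by
        have := norm_fst_le ((q.1 - t, q.2 - x):ℝ×ℝ)
        rw [Real.norm_eq_abs] at this
        exact lt_of_le_of_lt this hq
      exact (hc.tendsto q.1).eventually_lt_const hlt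
    have hev : (fun s => f (s, q.2)) =ᶠ[𝓝 q.1] (fun s => w (s, q.2)) := by
      filter_upwards [hsev] with s hs
      apply hfw (s, q.2)
      rw [Prod.norm_def]
      apply max_le
      · rw [Real.norm_eq_abs]; exact hs.le
      · rw [Real.norm_eq_abs]; exact hsnd.le
    exact (hw1 q).congr_of_eventuallyEq hev
  have hfb : ∀ q : ℝ×ℝ, ‖((q.1 - t, q.2 - x):ℝ×ℝ)‖ < r →
      HasDerivAt (fun y => f (q.1, y))
        (p + A*(q.2 - x) + JetAux.R2 mfun (q.1 - t, q.2 - x)) q.2 := by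
    intro q hq
    have hfst : |q.1 - t| < r := by
      have := norm_fst_le ((q.1 - t, q.2 - x):ℝ×ℝ)
      rw [Real.norm_eq_abs] at this
      exact lt_of_le_of_lt this hq
    have hsev : ∀ᶠ y : ℝ in 𝓝 q.2, |y - x| < r := by
      have hc : Continuous (fun y : ℝ => |y - x|) := (continuous_id.sub continuous_const).abs
      have hlt : |q.2 - x| < r := by
        have := norm_snd_le ((q.1 - t, q.2 - x):ℝ×ℝ)
        rw [Real.norm_eq_abs] at this
        exact lt_of_le_of_lt this hq
      exact (hc.tendsto q.2).eventually_lt_const hlt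
    have hev : (fun y => f (q.1, y)) =ᶠ[𝓝 q.2] (fun y => w (q.1, y)) := by
      filter_upwards [hsev] with y hy
      apply hfw (q.1, y)
      rw [Prod.norm_def]
      apply max_le
      · rw [Real.norm_eq_abs]; exact hfst.le
      · rw [Real.norm_eq_abs]; exact hy.le
    exact (hw2 q).congr_of_eventuallyEq hev
  have hsubshift : Continuous (fun q : ℝ×ℝ => ((q.1 - t, q.2 - x) : ℝ×ℝ)) :=
    (continuous_fst.sub continuous_const).prodMk (continuous_snd.sub continuous_const)
  -- MAIN refine
  refine ⟨r, f, hrpos, ?_, ?_, ?_, ?_, ?_, ?_, ?_, ?_, ?_⟩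
  · -- continuity on K
    rw [hfdef]
    have hcw : Continuous w := by
      rw [hwdef]
      exact ((((continuous_const.add
        (continuous_const.mul (continuous_fst.sub continuous_const))).add
        (continuous_const.mul (continuous_snd.sub continuous_const))).add
        (continuous_const.mul ((continuous_snd.sub continuous_const).pow 2))).add
        (hcontρ0.comp hsubshift))
    have hcχ : Continuous (fun q : ℝ×ℝ => χ (q.1 - t, q.2 - x)) := by
      rw [hχdef]
      exact (hβcont.comp (continuous_fst.sub continuous_const)).mul
        (hβcont.comp (continuous_snd.sub continuous_const))
    exact hv.add ((hcχ.continuousOn).mul ((hcw.continuousOn).sub hv))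
  · -- C12 near (t,x)
    refine ⟨Metric.ball ((t,x):ℝ×ℝ) r, Metric.isOpen_ball, Metric.mem_ball_self hrpos, ?_⟩
    unfold C12On
    refine ⟨(fun q => b + JetAux.R1 mfun (q.1 - t, q.2 - x)),
      (fun q => p + A*(q.2 - x) + JetAux.R2 mfun (q.1 - t, q.2 - x)),
      (fun q => A + JetAux.R3 mfun (q.1 - t, q.2 - x)), ?_, ?_, ?_, ?_, ?_, ?_⟩
    · exact (continuous_const.add (hR1cont.comp hsubshift)).continuousOn
    · exact ((continuous_const.add
        (continuous_const.mul (continuous_snd.sub continuous_const))).add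
        (hR2cont.comp hsubshift)).continuousOn
    · exact (continuous_const.add (hR3cont.comp hsubshift)).continuousOn
    · intro q hq
      apply hfa
      rw [Metric.mem_ball, dist_eq_norm, hpairsub] at hq
      exact hq
    · intro q hq
      apply hfb
      rw [Metric.mem_ball, dist_eq_norm, hpairsub] at hq
      exact hq
    · intro q _
      exact hW2d q
  · -- f (t,x) = v (t,x)
    have h0 : ‖((((t,x):ℝ×ℝ).1 - t, ((t,x):ℝ×ℝ).2 - x) : ℝ×ℝ)‖ ≤ r := by
      have e : ((((t,x):ℝ×ℝ).1 - t, ((t,x):ℝ×ℝ).2 - x) : ℝ×ℝ) = 0 :=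
        Prod.ext (by simp) (by simp)
      rw [e, norm_zero]
      exact hrpos.le
    rw [hfw ((t,x) : ℝ×ℝ) h0, hwq]
    have e1 : JetAux.rho0 mfun (((t,x):ℝ×ℝ).1 - t, ((t,x):ℝ×ℝ).2 - x) = 0 := by
      have e : ((((t,x):ℝ×ℝ).1 - t, ((t,x):ℝ×ℝ).2 - x) : ℝ×ℝ) = 0 :=
        Prod.ext (by simp) (by simp)
      rw [e]
      exact JetAux.rho0_zero
    rw [e1]
    simp
  · -- time derivative
    have h0 : ‖((((t,x):ℝ×ℝ).1 - t, ((t,x):ℝ×ℝ).2 - x) : ℝ×ℝ)‖ < r := by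
      have e : ((((t,x):ℝ×ℝ).1 - t, ((t,x):ℝ×ℝ).2 - x) : ℝ×ℝ) = 0 :=
        Prod.ext (by simp) (by simp)
      rw [e, norm_zero]
      exact hrpos
    have h' := hfa ((t,x):ℝ×ℝ) h0
    have e : b + JetAux.R1 mfun (((t,x):ℝ×ℝ).1 - t, ((t,x):ℝ×ℝ).2 - x) = b := by
      simp [JetAux.R1]
    rw [e] at h'
    exact h'.deriv
  · -- space derivative
    have h0 : ‖((((t,x):ℝ×ℝ).1 - t, ((t,x):ℝ×ℝ).2 - x) : ℝ×ℝ)‖ < r := by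
      have e : ((((t,x):ℝ×ℝ).1 - t, ((t,x):ℝ×ℝ).2 - x) : ℝ×ℝ) = 0 :=
        Prod.ext (by simp) (by simp)
      rw [e, norm_zero]
      exact hrpos
    have h' := hfb ((t,x):ℝ×ℝ) h0
    have e : p + A*(((t,x):ℝ×ℝ).2 - x) + JetAux.R2 mfun (((t,x):ℝ×ℝ).1 - t, ((t,x):ℝ×ℝ).2 - x) = p := by
      simp [JetAux.R2]
    rw [e] at h'
    exact h'.deriv
  · -- second space derivative
    have hevx : ∀ᶠ y : ℝ in 𝓝 x, |y - x| < r := by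
      have hc : Continuous (fun y : ℝ => |y - x|) := (continuous_id.sub continuous_const).abs
      have hx0 : |x - x| < r := by simpa using hrpos
      exact (hc.tendsto x).eventually_lt_const hx0
    have hev2 : (fun y => deriv (fun y' => f (t, y')) y) =ᶠ[𝓝 x]
        (fun y => p + A*(y - x) + JetAux.R2 mfun (t - t, y - x)) := by
      filter_upwards [hevx] with y hy
      have h' := hfb ((t, y) : ℝ×ℝ) (by
        rw [Prod.norm_def]
        apply max_lt
        · rw [Real.norm_eq_abs]
          simpa using hrpos
        · rw [Real.norm_eq_abs]
          simpa using hy)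
      exact h'.deriv
    rw [Filter.EventuallyEq.deriv_eq hev2]
    have h3 := hW2d ((t, x) : ℝ×ℝ)
    have e : A + JetAux.R3 mfun (((t,x):ℝ×ℝ).1 - t, ((t,x):ℝ×ℝ).2 - x) = A := by
      simp [JetAux.R3]
    rw [e] at h3
    exact h3.deriv
  · -- sandwich
    intro q hq
    by_cases hχ : χ (q.1 - t, q.2 - x) = 0
    · rw [hfq q, hχ, zero_mul, add_zero]
      exact ⟨le_rfl, by linarith [hε.1]⟩
    · have hhn : ‖((q.1 - t, q.2 - x):ℝ×ℝ)‖ < r + τ := by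
        by_contra hc
        push_neg at hc
        exact hχ (hχ_zero _ hc)
      have hhd : ‖((q.1 - t, q.2 - x):ℝ×ℝ)‖ ≤ d₁ := le_trans hhn.le hrτ
      have hhR : ‖((q.1 - t, q.2 - x):ℝ×ℝ)‖ ≤ R₀ := le_trans hhd hd₁R₀
      have key1 : u (q.1 - t, q.2 - x) ≤ JetAux.rho0 mfun (q.1 - t, q.2 - x) := hdom _ hhR
      have key2 : JetAux.rho0 mfun (q.1 - t, q.2 - x) ≤ ε/2 := hd₁' _ (le_trans hhd hd₁d₁')
      have key3 : |u (q.1 - t, q.2 - x)| ≤ ε/2 := hd₂' _ (le_trans hhd hd₁d₂')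
      have hwv : w q - v q =
          JetAux.rho0 mfun (q.1 - t, q.2 - x) - u (q.1 - t, q.2 - x) := by
        have e : ((t + (q.1 - t), x + (q.2 - x)) : ℝ×ℝ) = q := Prod.ext (by simp) (by simp)
        have hu' : u (q.1 - t, q.2 - x) = v (t + (q.1 - t), x + (q.2 - x)) -
            (v (t,x) + b*(q.1 - t) + p*(q.2 - x) + 1/2*A*(q.2 - x)^2) := rfl
        rw [hwq, hu', e]
        ring
      have hnn2 : 0 ≤ w q - v q := by rw [hwv]; linarith
      constructor
      · rw [hfq q]
        have := mul_nonneg (hχ_nn ((q.1 - t, q.2 - x):ℝ×ℝ)) hnn2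
        linarith
      · rw [hfq q]
        have h1 : χ (q.1 - t, q.2 - x) * (w q - v q) ≤ 1 * (w q - v q) :=
          mul_le_mul_of_nonneg_right (hχ_le1 _) hnn2
        have h2 : w q - v q ≤ ε := by
          rw [hwv]
          linarith [neg_abs_le (u ((q.1 - t, q.2 - x):ℝ×ℝ))]
        linarith
  · -- rho clause
    refine ⟨fun h => χ h * JetAux.rho0 mfun h, ?_, ?_, ?_, ?_⟩
    · apply HasCompactSupport.intro (isCompact_closedBall (0:ℝ×ℝ) (r + τ))
      intro h hh
      have hle : r + τ ≤ ‖h‖ := by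
        rw [Metric.mem_closedBall, dist_zero_right] at hh
        push_neg at hh
        exact hh.le
      rw [hχ_zero h hle, zero_mul]
    · unfold C12On
      refine ⟨fun h => deriv β h.1 * β h.2 * JetAux.rho0 mfun h
            + β h.1 * β h.2 * JetAux.R1 mfun h,
        fun h => β h.1 * deriv β h.2 * JetAux.rho0 mfun h
            + β h.1 * β h.2 * JetAux.R2 mfun h,
        fun h => β h.1 * deriv (deriv β) h.2 * JetAux.rho0 mfun h
            + β h.1 * deriv β h.2 * JetAux.R2 mfun h
          + (β h.1 * deriv β h.2 * JetAux.R2 mfun h + β h.1 * β h.2 * JetAux.R3 mfun h),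
        ?_, ?_, ?_, ?_, ?_, ?_⟩
      · exact ((((hβdcont.comp continuous_fst).mul (hβcont.comp continuous_snd)).mul
          hcontρ0).add
          (((hβcont.comp continuous_fst).mul (hβcont.comp continuous_snd)).mul
          hR1cont)).continuousOn
      · exact ((((hβcont.comp continuous_fst).mul (hβdcont.comp continuous_snd)).mul
          hcontρ0).add
          (((hβcont.comp continuous_fst).mul (hβcont.comp continuous_snd)).mul
          hR2cont)).continuousOn
      · exact (((((hβcont.comp continuous_fst).mul (hβddcont.comp continuous_snd)).mul
          hcontρ0).add
          (((hβcont.comp continuous_fst).mul (hβdcont.comp continuous_snd)).mul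
          hR2cont)).add
          (((((hβcont.comp continuous_fst).mul (hβdcont.comp continuous_snd)).mul
          hR2cont)).add
          (((hβcont.comp continuous_fst).mul (hβcont.comp continuous_snd)).mul
          hR3cont))).continuousOn
      · intro h _
        have hb1 : HasDerivAt (fun s : ℝ => β s * β h.2) (deriv β h.1 * β h.2) h.1 :=
          (hβd h.1).mul_const (β h.2)
        exact hb1.mul (hD1 h)
      · intro h _
        have hb2 : HasDerivAt (fun y : ℝ => β h.1 * β y) (β h.1 * deriv β h.2) h.2 :=
          (hβd h.2).const_mul (β h.1)
        exact hb2.mul (hD2 h)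
      · intro h _
        have part1 := ((hβdd h.2).const_mul (β h.1)).mul (hD2 h)
        have part2 := ((hβd h.2).const_mul (β h.1)).mul (hD3 h)
        exact part1.add part2
    · have hO : (fun h : ℝ×ℝ => χ h * JetAux.rho0 mfun h) =O[𝓝 (0:ℝ×ℝ)]
          (JetAux.rho0 mfun) := by
        apply Asymptotics.isBigO_of_le
        intro h2
        rw [norm_mul]
        calc ‖χ h2‖ * ‖JetAux.rho0 mfun h2‖ ≤ 1 * ‖JetAux.rho0 mfun h2‖ := by
              apply mul_le_mul_of_nonneg_right _ (norm_nonneg _)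
              rw [Real.norm_eq_abs, abs_of_nonneg (hχ_nn h2)]
              exact hχ_le1 h2
          _ = ‖JetAux.rho0 mfun h2‖ := one_mul _
      exact hO.trans_isLittleO hlo
    · intro h hh
      have hpr : (((t + h.1, x + h.2) : ℝ×ℝ).1 - t, ((t + h.1, x + h.2) : ℝ×ℝ).2 - x)
          = h := Prod.ext (by simp) (by simp)
      have hfw' := hfw ((t + h.1, x + h.2) : ℝ×ℝ) (by rw [hpr]; exact hh.le)
      rw [hfw', hwq, hpr]
      have e1 : (t + h.1, x + h.2).1 - t = h.1 := by simp
      have e2 : (t + h.1, x + h.2).2 - x = h.2 := by simp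
      rw [e1, e2]
      show _ = _ + χ h * JetAux.rho0 mfun h
      rw [hχ_one h hh.le, one_mul]
  · -- outside
    intro q hq hball
    rw [Metric.mem_ball] at hball
    push_neg at hball
    rw [dist_eq_norm, hpairsub] at hball
    rw [hfq q, hχ_zero _ (by linarith), zero_mul, add_zero]

end Main

end
end

section
/- Boundedness of the doubled-variable superlevel set: Let T > 0, δ ∈ (0,T), ε₀ > 0, and let ψ, ψ̃ : (0,T]×[0,∞) → [0,1] be continuous functions such that the limits ψ_∞(t) := lim_{u→∞} ψ(t,u) and ψ̃_∞(t) := lim_{u→∞} ψ̃(t,u) exist uniformly in t on compact subsets of (0,T], define continuous functions of t, and satisfy ψ_∞(t) = ψ̃_∞(t) for all t ∈ (0,T]. Then the set Γ := { (t,u,w) ∈ (0,T]×[0,∞)×[0,∞) : ψ(t,u) − ψ̃(t,w) − δ/t − (1/2)|u−w|² ≥ ε₀ } is a bounded subset of [δ,T]×[0,∞)×[0,∞). -/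
open Set Filter Topology

/-- **Boundedness of the doubled-variable superlevel set**: for continuous
`[0,1]`-valued `ψ, ψ̃` on `(0,T] × [0,∞)` whose limits `ψ∞(t) = lim_{u→∞} ψ(t,u)` and
`ψ̃∞(t) = lim_{u→∞} ψ̃(t,u)` exist uniformly in `t` on compact subsets of `(0,T]`, are
continuous, and coincide, the set
`Γ = { (t,u,w) : ψ(t,u) - ψ̃(t,w) - δ/t - (1/2)|u-w|² ≥ ε₀ }`
is a bounded subset of `[δ,T] × [0,∞) × [0,∞)`. -/
theorem doubled_superlevel_bounded
    (T δ ε₀ : ℝ) (hT : 0 < T) (hδ : δ ∈ Ioo 0 T) (hε₀ : 0 < ε₀)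
    (ψ ψt : ℝ → ℝ → ℝ)
    (hψc : ContinuousOn (fun p : ℝ × ℝ => ψ p.1 p.2) (Ioc 0 T ×ˢ Ici 0))
    (hψtc : ContinuousOn (fun p : ℝ × ℝ => ψt p.1 p.2) (Ioc 0 T ×ˢ Ici 0))
    (hψr : ∀ t ∈ Ioc (0 : ℝ) T, ∀ u ∈ Ici (0 : ℝ), ψ t u ∈ Icc (0 : ℝ) 1)
    (hψtr : ∀ t ∈ Ioc (0 : ℝ) T, ∀ u ∈ Ici (0 : ℝ), ψt t u ∈ Icc (0 : ℝ) 1)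
    (ψ_inf ψt_inf : ℝ → ℝ)
    (hlim : ∀ Kc : Set ℝ, IsCompact Kc → Kc ⊆ Ioc 0 T →
      TendstoUniformlyOn (fun u t => ψ t u) ψ_inf atTop Kc)
    (hlimt : ∀ Kc : Set ℝ, IsCompact Kc → Kc ⊆ Ioc 0 T →
      TendstoUniformlyOn (fun u t => ψt t u) ψt_inf atTop Kc)
    (hlimc : ContinuousOn ψ_inf (Ioc 0 T)) (hlimtc : ContinuousOn ψt_inf (Ioc 0 T))
    (hlimeq : ∀ t ∈ Ioc (0 : ℝ) T, ψ_inf t = ψt_inf t) :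
    Bornology.IsBounded
      {p : ℝ × ℝ × ℝ | p.1 ∈ Ioc 0 T ∧ p.2.1 ∈ Ici (0 : ℝ) ∧ p.2.2 ∈ Ici (0 : ℝ) ∧
        ε₀ ≤ ψ p.1 p.2.1 - ψt p.1 p.2.2 - δ / p.1 - (1 / 2) * |p.2.1 - p.2.2| ^ 2} ∧
    {p : ℝ × ℝ × ℝ | p.1 ∈ Ioc 0 T ∧ p.2.1 ∈ Ici (0 : ℝ) ∧ p.2.2 ∈ Ici (0 : ℝ) ∧
        ε₀ ≤ ψ p.1 p.2.1 - ψt p.1 p.2.2 - δ / p.1 - (1 / 2) * |p.2.1 - p.2.2| ^ 2} ⊆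
      Icc δ T ×ˢ Ici 0 ×ˢ Ici 0 := by

  obtain ⟨hδ0, hδT⟩ := hδ
  have hKc : IsCompact (Icc δ T) := isCompact_Icc
  have hKsub : Icc δ T ⊆ Ioc 0 T := fun t ht => ⟨lt_of_lt_of_le hδ0 ht.1, ht.2⟩
  obtain ⟨M₁, hM₁⟩ := Filter.eventually_atTop.mp
    ((Metric.tendstoUniformlyOn_iff.mp (hlim _ hKc hKsub)) (ε₀/2) (by linarith))
  obtain ⟨M₂, hM₂⟩ := Filter.eventually_atTop.mp
    ((Metric.tendstoUniformlyOn_iff.mp (hlimt _ hKc hKsub)) (ε₀/2) (by linarith))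
  set M := max M₁ M₂ with hM
  set S := {p : ℝ × ℝ × ℝ | p.1 ∈ Ioc 0 T ∧ p.2.1 ∈ Ici (0 : ℝ) ∧ p.2.2 ∈ Ici (0 : ℝ) ∧
        ε₀ ≤ ψ p.1 p.2.1 - ψt p.1 p.2.2 - δ / p.1 - (1 / 2) * |p.2.1 - p.2.2| ^ 2} with hS
  -- basic consequences of membership
  have key : ∀ p ∈ S, δ ≤ p.1 ∧ |p.2.1 - p.2.2| ≤ 2 := by
    rintro ⟨t, u, w⟩ ⟨ht, hu, hw, h4⟩
    have hψu := hψr t ht u hu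
    have hψw := hψtr t ht w hw
    have hsq : (0:ℝ) ≤ |u - w| ^ 2 := sq_nonneg _
    have hdiv : δ / t ≤ 1 - ε₀ := by nlinarith [hψu.2, hψw.1]
    have ht0 : 0 < t := ht.1
    have hδt : δ ≤ t := by
      by_contra hcon
      push_neg at hcon
      have : 1 < δ / t := (one_lt_div ht0).mpr hcon
      linarith
    refine ⟨hδt, ?_⟩
    have hdiv0 : 0 < δ / t := div_pos hδ0 ht0
    have h2 : |u - w| ^ 2 ≤ 2 := by nlinarith [hψu.2, hψw.1]
    nlinarith [abs_nonneg (u - w)]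
  have hsub : S ⊆ Icc δ T ×ˢ Ici 0 ×ˢ Ici 0 := by
    rintro ⟨t, u, w⟩ hp
    exact ⟨⟨(key _ hp).1, hp.1.2⟩, hp.2.1, hp.2.2.1⟩
  refine ⟨?_, hsub⟩
  -- bound u and w
  have hbd : S ⊆ Icc δ T ×ˢ Icc 0 (M + 2) ×ˢ Icc 0 (M + 2) := by
    rintro ⟨t, u, w⟩ hp
    obtain ⟨ht, hu, hw, h4⟩ := hp
    obtain ⟨hδt, habs⟩ := key _ ⟨ht, hu, hw, h4⟩
    have htK : t ∈ Icc δ T := ⟨hδt, ht.2⟩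
    have huw : u ≤ M + 2 ∧ w ≤ M + 2 := by
      by_contra hcon
      push_neg at hcon
      have hboth : M < u ∧ M < w := by
        rcases abs_le.mp habs with ⟨ha, hb⟩
        by_cases hcase : M + 2 < u
        · constructor
          · linarith
          · linarith
        · push_neg at hcase
          have hwbig := hcon hcase
          constructor
          · linarith
          · linarith
      have hu1 : M₁ ≤ u := le_trans (le_max_left _ _) hboth.1.le
      have hw2 : M₂ ≤ w := le_trans (le_max_right _ _) hboth.2.le
      have hd1 := hM₁ u hu1 t htK
      have hd2 := hM₂ w hw2 t htK
      rw [Real.dist_eq, abs_sub_lt_iff] at hd1 hd2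
      have heq := hlimeq t ht
      have hdiv0 : 0 < δ / t := div_pos hδ0 ht.1
      have hsq : (0:ℝ) ≤ |u - w| ^ 2 := sq_nonneg _
      linarith [hd1.1, hd1.2, hd2.1, hd2.2]
    exact ⟨htK, ⟨hu, huw.1⟩, ⟨hw, huw.2⟩⟩
  exact (Bornology.IsBounded.subset
    ((isCompact_Icc.prod (isCompact_Icc.prod isCompact_Icc)).isBounded) hbd)
end
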